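/- Let d ≥ 2. The critical heights map 𝒢 : 𝕄P_d → ℋ_d descends to a continuous map 𝒢̄ : 𝒯_d^* → ℋ_d on the quotient 𝒯_d^*, and every fiber of 𝒢̄ is a totally disconnected subset of 𝒯_d^*. -/

import Mathlib

/-- The escape rate `G_f(z) = lim_{n→∞} d⁻ⁿ · log⁺ |fⁿ(z)|` of a polynomial `f`,
where `d = deg f` and `log⁺ t = log (max t 1)`. -/
noncomputable def escapeRate (f : Polynomial ℂ) (z : ℂ) : ℝ :=
  Filter.limUnder Filter.atTop (fun n : ℕ =>
    ((f.natDegree : ℝ)⁻¹) ^ n * Real.log (max ‖(fun w => f.eval w)^[n] z‖ 1))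
/-- The monic centered polynomial `z^d + b_{d−2} z^{d−2} + ⋯ + b₁ z + b₀` with coefficient
vector `b ∈ ℂ^{d−1}`; this parametrizes the space `𝒫_d ≅ ℂ^{d−1}`. -/
noncomputable def toPoly (d : ℕ) (b : Fin (d - 1) → ℂ) : Polynomial ℂ :=
  Polynomial.X ^ d + ∑ i : Fin (d - 1), Polynomial.C (b i) * Polynomial.X ^ (i : ℕ)

/-- The critical heights of a monic centered polynomial: the nonincreasing rearrangement of
the escape rates of its critical points (roots of the derivative), listed with multiplicity. -/
noncomputable def heights (d : ℕ) (b : Fin (d - 1) → ℂ) : Fin (d - 1) → ℝ := fun i =>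
  ((Multiset.sort (Multiset.map (escapeRate (toPoly d b))
      (Polynomial.roots (Polynomial.derivative (toPoly d b)))) (· ≤ ·)).reverse).getD (i : ℕ) 0

/-- The equivalence on monic centered polynomials: `f ∼ g` iff `g(z) = ζ⁻¹ f(ζ z)` for some
`(d−1)`-st root of unity `ζ`. -/
def polyRel (d : ℕ) (b b' : Fin (d - 1) → ℂ) : Prop :=
  ∃ ζ : ℂ, ζ ^ (d - 1) = 1 ∧
    toPoly d b' = Polynomial.C ζ⁻¹ * (toPoly d b).comp (Polynomial.C ζ * Polynomial.X)

/-- The moduli space `𝕄P_d` of conformal conjugacy classes of monic centered degree-`d`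
polynomials, with the quotient topology. -/
def Moduli (d : ℕ) : Type := Quot (polyRel d)

instance (d : ℕ) : TopologicalSpace (Moduli d) :=
  inferInstanceAs (TopologicalSpace (Quot (polyRel d)))

/-- The critical heights map `𝒢 : 𝕄P_d → ℋ_d`.  (Since `heights` is invariant under the
conjugation equivalence, evaluating on the chosen representative `q.out` computes `𝒢`.) -/
noncomputable def Gq (d : ℕ) : Moduli d → (Fin (d - 1) → ℝ) := fun q => heights d q.out
/-- The relation on `𝕄P_d` collapsing each connected component of each fiber of the
critical heights map `𝒢` to a point. -/
def tRel (d : ℕ) (x y : Moduli d) : Prop :=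
  y ∈ connectedComponentIn (Gq d ⁻¹' {Gq d x}) x

/-- The quotient space `𝒯_d^*` of `𝕄P_d` by connected components of fibers of `𝒢`. -/
def Tstar (d : ℕ) : Type := Quot (tRel d)

instance (d : ℕ) : TopologicalSpace (Tstar d) :=
  inferInstanceAs (TopologicalSpace (Quot (tRel d)))

/-!
Write `f = z^d + q` with `|q(z)| ≤ R · max(1, |z|)^(d-1)`. Then `log⁺|f(z)|` and `d · log⁺|z|`
differ by at most `d · log⁺(2R)`, so `d⁻ⁿ log⁺|fⁿ(z)|` converges geometrically, locally uniformly
in the coefficients and in `z`, and the escape rate is jointly continuous. Cauchy's bound keeps the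
critical points bounded, so along subsequences they converge to the critical points of the limit
polynomial; each entry of the sorted list of critical escape rates is a min of maxes, hence
continuous. Conjugating by a root of unity rotates both the orbits and the critical points, so the
heights descend continuously to `𝕄P_d`.

If `t` is a preconnected subset of a fiber of the induced map on `𝒯_d^*`, the preimage of its
closure in `𝕄P_d` is connected, because the quotient map has connected fibers. It lies in a single
fiber of `𝒢`, hence in a single component of that fiber, so `t` is at most a point.
-/

open Set Real Filter Topology Polynomial

section FiberComponents

variable {X Y : Type*} [TopologicalSpace X]

def fiberComponentRel (f : X → Y) (x y : X) : Prop :=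
  y ∈ connectedComponentIn (f ⁻¹' {f x}) x

theorem fiberComponentRel.apply_eq {f : X → Y} {x y : X} (h : fiberComponentRel f x y) :
    f x = f y :=
  (connectedComponentIn_subset (f ⁻¹' {f x}) x h : f y = f x).symm

theorem fiberComponentRel.connectedComponentIn_eq {f : X → Y} {x y : X}
    (h : fiberComponentRel f x y) :
    connectedComponentIn (f ⁻¹' {f y}) y = connectedComponentIn (f ⁻¹' {f x}) x := by
  rw [← h.apply_eq]
  exact (_root_.connectedComponentIn_eq h).symm

theorem fiberComponentRel_equivalence (f : X → Y) : Equivalence (fiberComponentRel f) where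
  refl _ := mem_connectedComponentIn rfl
  symm {x y} h := by
    change x ∈ _
    rw [h.connectedComponentIn_eq]
    exact mem_connectedComponentIn rfl
  trans {x y z} hxy hyz := by
    change z ∈ _
    rw [← hxy.connectedComponentIn_eq]
    exact hyz

theorem preimage_quot_mk_fiberComponentRel (f : X → Y) (x : X) :
    Quot.mk (fiberComponentRel f) ⁻¹' {Quot.mk _ x} = connectedComponentIn (f ⁻¹' {f x}) x := by
  ext y
  rw [Set.mem_preimage, mem_singleton_iff, Quot.eq, (fiberComponentRel_equivalence f).eqvGen_iff]
  exact ⟨(fiberComponentRel_equivalence f).symm, (fiberComponentRel_equivalence f).symm⟩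

theorem isTotallyDisconnected_preimage_quot_lift [TopologicalSpace Y] [T1Space Y] {f : X → Y}
    (hf : Continuous f) (y : Y) :
    IsTotallyDisconnected (Quot.lift f (fun _ _ ↦ fiberComponentRel.apply_eq) ⁻¹' {y}) := by
  set p := Quot.mk (fiberComponentRel f)
  have hp : IsQuotientMap p := isQuotientMap_quot_mk
  intro t hty ht
  rcases t.eq_empty_or_nonempty with rfl | htne
  · exact subsingleton_empty
  have hS : IsConnected (p ⁻¹' closure t) := by
    refine hp.isCoinducing.isConnected_preimage_of_isClosed (fun q ↦ ?_) isClosed_closure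
      (IsConnected.closure ⟨htne, ht⟩)
    obtain ⟨x, rfl⟩ := hp.surjective q
    rw [preimage_quot_mk_fiberComponentRel]
    exact isConnected_connectedComponentIn_iff.mpr rfl
  obtain ⟨x, hx⟩ := hS.nonempty
  have hclosure : closure t ⊆ Quot.lift f _ ⁻¹' {y} :=
    closure_minimal hty (isClosed_singleton.preimage (continuous_quot_lift _ hf))
  have hfiber : p ⁻¹' closure t ⊆ f ⁻¹' {f x} := fun x' hx' ↦
    ((hclosure hx').trans (hclosure hx).symm : f x' = f x)
  have hpx : ∀ x' ∈ p ⁻¹' closure t, p x' = p x := fun x' hx' ↦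
    (Quot.sound (hS.isPreconnected.subset_connectedComponentIn hx hfiber hx')).symm
  intro a ha b hb
  obtain ⟨a, rfl⟩ := hp.surjective a
  obtain ⟨b, rfl⟩ := hp.surjective b
  rw [hpx a (subset_closure ha), hpx b (subset_closure hb)]

end FiberComponents

section EscapeRate

variable {E : Type*} [SeminormedAddCommGroup E]

noncomputable def escapeApprox (g : E → E) (d : ℝ) (z : E) (n : ℕ) : ℝ :=
  d⁻¹ ^ n * log⁺ ‖g^[n] z‖

variable {g : E → E} {d C : ℝ}

theorem dist_escapeApprox_succ_le (hd : 0 < d)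
    (hg : ∀ z, |log⁺ ‖g z‖ - d * log⁺ ‖z‖| ≤ C) (z : E) (n : ℕ) :
    dist (escapeApprox g d z n) (escapeApprox g d z (n + 1)) ≤ C / d * d⁻¹ ^ n := by
  have hsucc : escapeApprox g d z (n + 1) - escapeApprox g d z n =
      d⁻¹ ^ (n + 1) * (log⁺ ‖g (g^[n] z)‖ - d * log⁺ ‖g^[n] z‖) := by
    rw [escapeApprox, escapeApprox, Function.iterate_succ_apply', pow_succ]
    field_simp
  calc dist (escapeApprox g d z n) (escapeApprox g d z (n + 1))
      = d⁻¹ ^ (n + 1) * |log⁺ ‖g (g^[n] z)‖ - d * log⁺ ‖g^[n] z‖| := by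
        rw [dist_comm, Real.dist_eq, hsucc, abs_mul, abs_of_pos (by positivity)]
    _ ≤ d⁻¹ ^ (n + 1) * C := mul_le_mul_of_nonneg_left (hg _) (by positivity)
    _ = C / d * d⁻¹ ^ n := by rw [pow_succ]; ring

theorem tendsto_escapeApprox (hd : 1 < d) (hg : ∀ z, |log⁺ ‖g z‖ - d * log⁺ ‖z‖| ≤ C)
    (z : E) :
    Tendsto (escapeApprox g d z) atTop (𝓝 (limUnder atTop (escapeApprox g d z))) :=
  (cauchySeq_of_le_geometric _ _ (inv_lt_one_of_one_lt₀ hd)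
    (dist_escapeApprox_succ_le (by linarith) hg z)).tendsto_limUnder

theorem dist_escapeApprox_limUnder_le (hd : 1 < d)
    (hg : ∀ z, |log⁺ ‖g z‖ - d * log⁺ ‖z‖| ≤ C) (z : E) (n : ℕ) :
    dist (escapeApprox g d z n) (limUnder atTop (escapeApprox g d z)) ≤
      C / d / (1 - d⁻¹) * d⁻¹ ^ n := by
  have := dist_le_of_le_geometric_of_tendsto _ _ (inv_lt_one_of_one_lt₀ hd)
    (dist_escapeApprox_succ_le (by linarith) hg z) (tendsto_escapeApprox hd hg z) n
  rwa [mul_div_right_comm] at this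

theorem continuous_limUnder_escapeApprox {P : Type*} [TopologicalSpace P] {g : P → E → E}
    (hg : Continuous fun q : P × E ↦ g q.1 q.2) (hd : 1 < d)
    (hC : ∀ p, ∃ C, ∀ᶠ p' in 𝓝 p, ∀ z, |log⁺ ‖g p' z‖ - d * log⁺ ‖z‖| ≤ C) :
    Continuous fun q : P × E ↦ limUnder atTop (escapeApprox (g q.1) d q.2) := by
  have hiter (n : ℕ) : Continuous fun q : P × E ↦ (g q.1)^[n] q.2 := by
    induction n with
    | zero => exact continuous_snd
    | succ n ih =>
      simp only [Function.iterate_succ_apply']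
      exact hg.comp (continuous_fst.prodMk ih)
  refine TendstoLocallyUniformly.continuous (p := atTop)
    (F := fun n q ↦ escapeApprox (g q.1) d q.2 n) ?_
    (Frequently.of_forall fun n ↦ continuous_const.mul
      (continuous_posLog.comp (continuous_norm.comp (hiter n))))
  rw [Metric.tendstoLocallyUniformly_iff]
  rintro ε hε ⟨p, z⟩
  obtain ⟨C, hCp⟩ := hC p
  have hsmall : Tendsto (fun n : ℕ ↦ C / d / (1 - d⁻¹) * d⁻¹ ^ n) atTop (𝓝 0) := by
    simpa using (tendsto_pow_atTop_nhds_zero_of_lt_one (by positivity)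
      (inv_lt_one_of_one_lt₀ hd)).const_mul (C / d / (1 - d⁻¹))
  refine ⟨_, prod_mem_nhds hCp univ_mem, ?_⟩
  filter_upwards [hsmall.eventually_lt_const hε] with n hn
  rintro ⟨p', z'⟩ ⟨hp', -⟩
  rw [dist_comm]
  exact (dist_escapeApprox_limUnder_le hd hp' z' n).trans_lt hn

end EscapeRate

section LogEstimates

variable {a A R : ℝ} {d : ℕ}

theorem posLog_le_posLog_add_mul_posLog (ha : 0 ≤ a) (hA : 0 ≤ A) (hR : 1 ≤ R)
    (h : A ≤ a ^ d + R * max 1 a ^ (d - 1)) : log⁺ A ≤ log⁺ (2 * R) + d * log⁺ a := by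
  set M := max 1 a
  have hM : 1 ≤ M := le_max_left _ _
  have hAM : A ≤ 2 * R * M ^ d := by
    have h1 : a ^ d ≤ M ^ d := pow_le_pow_left₀ ha (le_max_right _ _) d
    have h2 : M ^ (d - 1) ≤ M ^ d := pow_le_pow_right₀ hM (Nat.sub_le d 1)
    nlinarith [one_le_pow₀ (n := d) hM]
  calc log⁺ A ≤ log⁺ (2 * R * M ^ d) := posLog_le_posLog hA hAM
    _ ≤ log⁺ (2 * R) + log⁺ (M ^ d) := posLog_mul
    _ = log⁺ (2 * R) + d * log⁺ a := by
      rw [posLog_pow, posLog_eq_log_max_one ha,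
        posLog_eq_log (x := M) (by rwa [abs_of_pos (by linarith)])]

theorem mul_posLog_le_mul_posLog_add_posLog (ha : 0 ≤ a) (hR : 1 ≤ R) (hd : 1 ≤ d)
    (h : a ^ d - R * max 1 a ^ (d - 1) ≤ A) : d * log⁺ a ≤ d * log⁺ (2 * R) + log⁺ A := by
  rcases le_or_gt a (2 * R) with hsmall | hlarge
  · have := mul_le_mul_of_nonneg_left (posLog_le_posLog ha hsmall) (Nat.cast_nonneg d)
    linarith [posLog_nonneg (x := A)]
  have hhalf : a ^ d / 2 ≤ A := by
    have : R * a ^ (d - 1) ≤ a ^ d / 2 := by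
      rw [← pow_sub_one_mul (by omega : d ≠ 0) a]
      nlinarith [pow_nonneg ha (d - 1)]
    rw [max_eq_right (by linarith)] at h
    linarith
  have hlog2 : log⁺ 2 ≤ d * log⁺ (2 * R) :=
    (posLog_le_posLog zero_le_two (by linarith)).trans
      (le_mul_of_one_le_left posLog_nonneg (by exact_mod_cast hd))
  calc (d : ℝ) * log⁺ a = log⁺ (2 * (a ^ d / 2)) := by
        rw [mul_div_cancel₀ _ two_ne_zero, posLog_pow]
    _ ≤ log⁺ 2 + log⁺ (a ^ d / 2) := posLog_mul
    _ ≤ d * log⁺ (2 * R) + log⁺ A := add_le_add hlog2 (posLog_le_posLog (by positivity) hhalf)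

theorem abs_posLog_sub_mul_posLog_le (ha : 0 ≤ a) (hA : 0 ≤ A) (hR : 1 ≤ R) (hd : 1 ≤ d)
    (h : |A - a ^ d| ≤ R * max 1 a ^ (d - 1)) :
    |log⁺ A - d * log⁺ a| ≤ d * log⁺ (2 * R) := by
  have hup := posLog_le_posLog_add_mul_posLog ha hA hR (by linarith [(abs_le.mp h).2])
  have hlow := mul_posLog_le_mul_posLog_add_posLog (A := A) ha hR hd (by linarith [(abs_le.mp h).1])
  have hlog : log⁺ (2 * R) ≤ d * log⁺ (2 * R) :=
    le_mul_of_one_le_left posLog_nonneg (by exact_mod_cast hd)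
  rw [abs_sub_le_iff]
  constructor <;> linarith

end LogEstimates

theorem natDegree_toPoly (d : ℕ) (b : Fin (d - 1) → ℂ) : (toPoly d b).natDegree = d := by
  have hlt : (∑ i : Fin (d - 1), C (b i) * X ^ (i : ℕ)).degree < (X ^ d : ℂ[X]).degree := by
    rw [degree_X_pow]
    exact (degree_sum_fin_lt b).trans_le (by exact_mod_cast Nat.sub_le d 1)
  rw [toPoly, natDegree_add_eq_left_of_degree_lt hlt, natDegree_X_pow]

theorem norm_eval_toPoly_sub_pow_le (d : ℕ) (b : Fin (d - 1) → ℂ) (z : ℂ) :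
    ‖(toPoly d b).eval z - z ^ d‖ ≤ (∑ i, ‖b i‖) * max 1 ‖z‖ ^ (d - 1) := by
  simp only [toPoly, eval_add, eval_pow, eval_X, eval_finsetSum, eval_mul, eval_C,
    add_sub_cancel_left, Finset.sum_mul]
  refine (norm_sum_le _ _).trans (Finset.sum_le_sum fun i _ ↦ ?_)
  rw [norm_mul, norm_pow]
  gcongr
  calc ‖z‖ ^ (i : ℕ) ≤ max 1 ‖z‖ ^ (i : ℕ) := by gcongr; exact le_max_right _ _
    _ ≤ max 1 ‖z‖ ^ (d - 1) := pow_le_pow_right₀ (le_max_left _ _) i.isLt.le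

theorem abs_posLog_norm_eval_toPoly_sub_le {d : ℕ} (hd : 1 ≤ d) {R : ℝ} (hR : 1 ≤ R)
    {b : Fin (d - 1) → ℂ} (hb : ∑ i, ‖b i‖ ≤ R) (z : ℂ) :
    |log⁺ ‖(toPoly d b).eval z‖ - d * log⁺ ‖z‖| ≤ d * log⁺ (2 * R) := by
  refine abs_posLog_sub_mul_posLog_le (norm_nonneg _) (norm_nonneg _) hR hd ?_
  calc |‖(toPoly d b).eval z‖ - ‖z‖ ^ d| ≤ ‖(toPoly d b).eval z - z ^ d‖ := by
        rw [← norm_pow]; exact abs_norm_sub_norm_le _ _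
    _ ≤ (∑ i, ‖b i‖) * max 1 ‖z‖ ^ (d - 1) := norm_eval_toPoly_sub_pow_le d b z
    _ ≤ R * max 1 ‖z‖ ^ (d - 1) := by gcongr

theorem escapeRate_eq_limUnder (f : ℂ[X]) (z : ℂ) :
    escapeRate f z = limUnder atTop (escapeApprox (fun w ↦ f.eval w) f.natDegree z) := by
  unfold escapeRate escapeApprox
  congr! 2 with n
  rw [posLog_eq_log_max_one (norm_nonneg _), max_comm]

theorem continuous_escapeRate_toPoly {d : ℕ} (hd : 2 ≤ d) :
    Continuous fun q : (Fin (d - 1) → ℂ) × ℂ ↦ escapeRate (toPoly d q.1) q.2 := by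
  simp only [escapeRate_eq_limUnder, natDegree_toPoly]
  refine continuous_limUnder_escapeApprox (g := fun b z ↦ (toPoly d b).eval z) ?_
    (by exact_mod_cast hd) fun b ↦ ⟨d * log⁺ (2 * (∑ i, ‖b i‖ + 1)), ?_⟩
  · simp only [toPoly, eval_add, eval_pow, eval_X, eval_finsetSum, eval_mul, eval_C]
    fun_prop
  · have hcont : Continuous fun b : Fin (d - 1) → ℂ ↦ ∑ i, ‖b i‖ := by fun_prop
    filter_upwards [hcont.continuousAt.eventually_lt continuousAt_const (lt_add_one _)]
      with b' hb' z
    exact abs_posLog_norm_eval_toPoly_sub_le (by omega)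
      (by linarith [Finset.sum_nonneg fun i (_ : i ∈ Finset.univ) ↦ norm_nonneg (b i)])
      hb'.le z

section OrderStatistic

variable {α : Type*} [LinearOrder α] {m : ℕ}

/-- The `(j + 1)`-st smallest entry of `w`, written through the min–max formula, which makes
its continuity in `w` evident. -/
noncomputable def orderStatistic (w : Fin m → α) (j : Fin m) : α :=
  Finset.univ.inf' ⟨Fin.castLEEmb j.isLt, Finset.mem_univ _⟩ fun e : Fin (j + 1) ↪ Fin m ↦
    Finset.univ.sup' Finset.univ_nonempty (w ∘ e)

theorem orderStatistic_comp_perm_le (w : Fin m → α) (σ : Equiv.Perm (Fin m)) (j : Fin m) :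
    orderStatistic (w ∘ σ) j ≤ orderStatistic w j :=
  Finset.le_inf' _ _ fun e _ ↦ Finset.inf'_le_of_le _ (Finset.mem_univ (e.trans σ.symm.toEmbedding))
    (by simp [Function.comp_def])

theorem orderStatistic_comp_perm (w : Fin m → α) (σ : Equiv.Perm (Fin m)) :
    orderStatistic (w ∘ σ) = orderStatistic w := by
  funext j
  refine (orderStatistic_comp_perm_le w σ j).antisymm ?_
  simpa [Function.comp_assoc] using orderStatistic_comp_perm_le (w ∘ σ) σ.symm j

theorem orderStatistic_of_monotone {g : Fin m → α} (hg : Monotone g) :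
    orderStatistic g = g := by
  funext j
  refine le_antisymm (Finset.inf'_le_of_le _ (Finset.mem_univ (Fin.castLEEmb j.isLt))
    (Finset.sup'_le _ _ fun k _ ↦ hg (Nat.lt_succ_iff.mp k.isLt))) (Finset.le_inf' _ _ fun e _ ↦ ?_)
  obtain ⟨k, hk⟩ : ∃ k, j ≤ e k := by
    by_contra! h
    have := Fintype.card_le_of_injective (fun k ↦ (⟨e k, h k⟩ : Fin j))
      fun k k' hkk' ↦ e.injective (Fin.ext (Fin.mk.inj hkk'))
    simp at this
  exact Finset.le_sup'_of_le _ (Finset.mem_univ k) (hg hk)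

theorem comp_sort_eq_orderStatistic (w : Fin m → α) :
    w ∘ Tuple.sort w = orderStatistic w := by
  rw [← orderStatistic_comp_perm w (Tuple.sort w),
    orderStatistic_of_monotone (Tuple.monotone_sort w)]

theorem continuous_orderStatistic [TopologicalSpace α] [OrderClosedTopology α] :
    Continuous (orderStatistic : (Fin m → α) → Fin m → α) :=
  continuous_pi fun _ ↦ Continuous.finset_inf'_apply _ fun _ _ ↦
    Continuous.finset_sup'_apply _ fun _ _ ↦ continuous_apply _

theorem Multiset.sort_ofFn (w : Fin m → α) :
    Multiset.sort (↑(List.ofFn w) : Multiset α) (· ≤ ·) = List.ofFn (w ∘ Tuple.sort w) :=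
  List.Perm.eq_of_pairwise' (Multiset.pairwise_sort _ _)
    (Tuple.monotone_sort w).sortedLE_ofFn.pairwise
    (Multiset.coe_eq_coe.mp (by rw [Multiset.sort_eq]; exact
      (Multiset.coe_eq_coe.mpr ((Tuple.sort w).ofFn_comp_perm w)).symm))

end OrderStatistic

theorem monic_toPoly (d : ℕ) (b : Fin (d - 1) → ℂ) : (toPoly d b).Monic :=
  monic_X_pow_add ((degree_sum_fin_lt b).trans_le (by exact_mod_cast Nat.sub_le d 1))

theorem norm_coeff_toPoly_le {d n : ℕ} (hn : n < d) (b : Fin (d - 1) → ℂ) :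
    ‖(toPoly d b).coeff n‖ ≤ ‖b‖ := by
  simp only [toPoly, coeff_add, coeff_X_pow, hn.ne, if_false, zero_add, finsetSum_coeff,
    coeff_C_mul_X_pow]
  by_cases h : n < d - 1
  · rw [Finset.sum_eq_single ⟨n, h⟩ (fun j _ hj ↦ if_neg fun h' ↦ hj (Fin.ext h'.symm))
      (by simp), if_pos rfl]
    exact norm_le_pi_norm b _
  · rw [Finset.sum_eq_zero fun (j : Fin (d - 1)) _ ↦ if_neg fun (h' : n = j) ↦ h (h' ▸ j.isLt),
      norm_zero]
    exact norm_nonneg b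

theorem norm_lt_of_mem_roots_derivative_toPoly {d : ℕ} {b : Fin (d - 1) → ℂ} {r : ℂ}
    (hr : r ∈ (derivative (toPoly d b)).roots) : ‖r‖ < ‖b‖ + 1 := by
  set p := derivative (toPoly d b)
  have hlead : p.leadingCoeff = d := by
    rw [leadingCoeff_derivative, (monic_toPoly d b).leadingCoeff, natDegree_toPoly, one_mul]
  have hdeg : p.natDegree = d - 1 := by rw [natDegree_derivative, natDegree_toPoly]
  obtain rfl | hd := Nat.eq_zero_or_pos d
  · simp [p, natDegree_toPoly] at hr
  have hbound : (cauchyBound p : ℝ) ≤ ‖b‖ + 1 := by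
    have hsup : (Finset.range p.natDegree).sup (‖p.coeff ·‖₊) ≤ ‖b‖₊ * ‖p.leadingCoeff‖₊ := by
      refine Finset.sup_le fun i hi ↦ ?_
      rw [Finset.mem_range, hdeg] at hi
      rw [← NNReal.coe_le_coe]
      push_cast
      rw [hlead, coeff_derivative, norm_mul, Complex.norm_natCast]
      have hi' : ‖((i : ℂ) + 1)‖ = i + 1 := by exact_mod_cast Complex.norm_natCast (i + 1)
      rw [hi']
      exact mul_le_mul (norm_coeff_toPoly_le (by omega) b)
        (by exact_mod_cast (by omega : i + 1 ≤ d)) (by positivity) (norm_nonneg b)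
    unfold cauchyBound
    push_cast
    have := NNReal.coe_le_coe.mpr hsup
    push_cast at this
    gcongr
    exact div_le_of_le_mul₀ (norm_nonneg _) (norm_nonneg b) this
  exact (NNReal.coe_lt_coe.mpr
    ((mem_roots'.mp hr).2.norm_lt_cauchyBound (mem_roots'.mp hr).1)).trans_le hbound

theorem Multiset.exists_ofFn_eq {α : Type*} {s : Multiset α} {m : ℕ} (h : card s = m) :
    ∃ v : Fin m → α, (↑(List.ofFn v) : Multiset α) = s := by
  obtain ⟨l, rfl⟩ := Quot.exists_rep s
  subst h
  exact ⟨l.get, congrArg _ (List.ofFn_get l)⟩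

theorem Polynomial.eval_prod_ofFn_X_sub_C {R : Type*} [CommRing R] {m : ℕ} (v : Fin m → R)
    (z : R) : (((↑(List.ofFn v) : Multiset R).map fun a ↦ X - C a).prod).eval z =
      ∏ j, (z - v j) := by
  rw [eval_multiset_prod, Multiset.map_map, Multiset.map_coe, Multiset.prod_coe, List.map_ofFn,
    List.prod_ofFn]
  simp

theorem exists_ofFn_eq_roots_derivative_toPoly (d : ℕ) (b : Fin (d - 1) → ℂ) :
    ∃ v : Fin (d - 1) → ℂ, ↑(List.ofFn v) = (derivative (toPoly d b)).roots :=
  Multiset.exists_ofFn_eq (by rw [IsAlgClosed.card_roots_eq_natDegree, natDegree_derivative,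
    natDegree_toPoly])

theorem eval_derivative_toPoly_eq_prod {d : ℕ} {b v : Fin (d - 1) → ℂ}
    (hv : ↑(List.ofFn v) = (derivative (toPoly d b)).roots) (z : ℂ) :
    (derivative (toPoly d b)).eval z = d * ∏ j, (z - v j) := by
  conv_lhs => rw [← C_leadingCoeff_mul_prod_multiset_X_sub_C
    (IsAlgClosed.card_roots_eq_natDegree (p := derivative (toPoly d b)))]
  rw [eval_mul, eval_C, ← hv, eval_prod_ofFn_X_sub_C, leadingCoeff_derivative,
    (monic_toPoly d b).leadingCoeff, natDegree_toPoly, one_mul]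

theorem ofFn_eq_roots_derivative_toPoly {d : ℕ} (hd : 1 ≤ d) {b v : Fin (d - 1) → ℂ}
    (hv : ∀ z, (derivative (toPoly d b)).eval z = d * ∏ j, (z - v j)) :
    ↑(List.ofFn v) = (derivative (toPoly d b)).roots := by
  have hprod : derivative (toPoly d b) =
      C (d : ℂ) * ((↑(List.ofFn v) : Multiset ℂ).map fun a ↦ X - C a).prod :=
    Polynomial.funext fun z ↦ by rw [hv, eval_mul, eval_C, eval_prod_ofFn_X_sub_C]
  rw [hprod, roots_C_mul _ (by exact_mod_cast (by omega : d ≠ 0)), roots_multiset_prod_X_sub_C]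

theorem continuous_eval_derivative_toPoly (d : ℕ) (z : ℂ) :
    Continuous fun b : Fin (d - 1) → ℂ ↦ (derivative (toPoly d b)).eval z := by
  simp only [toPoly, derivative_add, derivative_sum, derivative_X_pow, derivative_C_mul_X_pow,
    eval_add, eval_finsetSum, eval_mul, eval_C, eval_pow, eval_X]
  fun_prop

theorem exists_subseq_tendsto_roots_derivative_toPoly {d : ℕ} (hd : 1 ≤ d)
    {b : ℕ → Fin (d - 1) → ℂ} {b₀ : Fin (d - 1) → ℂ} (hb : Tendsto b atTop (𝓝 b₀))
    {v : ℕ → Fin (d - 1) → ℂ}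
    (hv : ∀ k, ↑(List.ofFn (v k)) = (derivative (toPoly d (b k))).roots) :
    ∃ v₀ : Fin (d - 1) → ℂ, ∃ φ : ℕ → ℕ, StrictMono φ ∧ Tendsto (v ∘ φ) atTop (𝓝 v₀) ∧
      ↑(List.ofFn v₀) = (derivative (toPoly d b₀)).roots := by
  obtain ⟨B, hB⟩ := hb.norm.bddAbove_range
  have hvB (k : ℕ) : v k ∈ Metric.closedBall 0 (B + 1) := by
    rw [mem_closedBall_zero_iff]
    refine (pi_norm_le_iff_of_nonneg ?_).mpr fun j ↦ ?_
    · linarith [norm_nonneg (b 0), hB ⟨0, rfl⟩]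
    have hroot : v k j ∈ (derivative (toPoly d (b k))).roots :=
      hv k ▸ Multiset.mem_coe.mpr (List.mem_ofFn.mpr ⟨j, rfl⟩)
    linarith [norm_lt_of_mem_roots_derivative_toPoly hroot, hB ⟨k, rfl⟩]
  obtain ⟨v₀, -, φ, hφ, hvφ⟩ := tendsto_subseq_of_bounded Metric.isBounded_closedBall hvB
  refine ⟨v₀, φ, hφ, hvφ, ofFn_eq_roots_derivative_toPoly hd fun z ↦ tendsto_nhds_unique
    (((continuous_eval_derivative_toPoly d z).tendsto b₀).comp (hb.comp hφ.tendsto_atTop)) ?_⟩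
  simp only [Function.comp_def, eval_derivative_toPoly_eq_prod (hv _)]
  exact tendsto_const_nhds.mul
    (tendsto_finsetProd _ fun j _ ↦ tendsto_const_nhds.sub (tendsto_pi_nhds.mp hvφ j))

theorem heights_eq_orderStatistic {d : ℕ} {b v : Fin (d - 1) → ℂ}
    (hv : ↑(List.ofFn v) = (derivative (toPoly d b)).roots) :
    heights d b = fun i ↦ orderStatistic (fun j ↦ escapeRate (toPoly d b) (v j)) i.rev := by
  funext i
  rw [heights, ← hv, Multiset.map_coe, List.map_ofFn, Multiset.sort_ofFn,
    comp_sort_eq_orderStatistic, List.getD_eq_getElem _ _ (by simp), List.getElem_reverse,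
    List.getElem_ofFn]
  congr 1
  ext
  simp only [List.length_ofFn, Fin.val_rev]
  omega

theorem continuous_heights {d : ℕ} (hd : 2 ≤ d) : Continuous (heights d) := by
  refine continuous_iff_seqContinuous.mpr fun b b₀ hb ↦ tendsto_of_subseq_tendsto fun ns hns ↦ ?_
  choose v hv using fun k ↦ exists_ofFn_eq_roots_derivative_toPoly d (b (ns k))
  obtain ⟨v₀, φ, hφ, hvφ, hv₀⟩ :=
    exists_subseq_tendsto_roots_derivative_toPoly (by omega) (hb.comp hns) hv
  refine ⟨φ, ?_⟩
  have hbφ : Tendsto (fun k ↦ b (ns (φ k))) atTop (𝓝 b₀) := hb.comp (hns.comp hφ.tendsto_atTop)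
  have hcrit : Tendsto (fun k j ↦ escapeRate (toPoly d (b (ns (φ k)))) (v (φ k) j)) atTop
      (𝓝 fun j ↦ escapeRate (toPoly d b₀) (v₀ j)) :=
    tendsto_pi_nhds.mpr fun j ↦ ((continuous_escapeRate_toPoly hd).tendsto (b₀, v₀ j)).comp
      (f := fun k ↦ (b (ns (φ k)), v (φ k) j)) (hbφ.prodMk_nhds (tendsto_pi_nhds.mp hvφ j))
  have hseq : (fun k ↦ heights d (b (ns (φ k)))) = fun k i ↦
      orderStatistic (fun j ↦ escapeRate (toPoly d (b (ns (φ k)))) (v (φ k) j)) i.rev :=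
    funext fun k ↦ heights_eq_orderStatistic (hv (φ k))
  change Tendsto (fun k ↦ heights d (b (ns (φ k)))) atTop _
  rw [hseq, heights_eq_orderStatistic hv₀]
  exact tendsto_pi_nhds.mpr fun i ↦
    tendsto_pi_nhds.mp ((continuous_orderStatistic.tendsto _).comp hcrit) i.rev

theorem escapeRate_eq_of_semiconj {f g : ℂ[X]} {h : ℂ → ℂ}
    (hfg : Function.Semiconj h (fun z ↦ g.eval z) (fun z ↦ f.eval z)) (hh : ∀ z, ‖h z‖ = ‖z‖)
    (hdeg : g.natDegree = f.natDegree) (z : ℂ) : escapeRate g z = escapeRate f (h z) := by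
  unfold escapeRate
  rw [hdeg]
  congr! 4 with n
  rw [← (hfg.iterate_right n).eq z, hh]

theorem heights_eq_of_polyRel {d : ℕ} (hd : 2 ≤ d) {b b' : Fin (d - 1) → ℂ}
    (h : polyRel d b b') : heights d b = heights d b' := by
  obtain ⟨ζ, hζ, hb'⟩ := h
  have hζ1 : ‖ζ‖ = 1 := Complex.norm_eq_one_of_pow_eq_one hζ (by omega)
  have hζ0 : ζ ≠ 0 := norm_ne_zero_iff.mp (by simp [hζ1])
  have hsemi : Function.Semiconj (ζ * ·) (fun z ↦ (toPoly d b').eval z)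
      (fun z ↦ (toPoly d b).eval z) := fun z ↦ by
    simp [hb', eval_comp, hζ0]
  have hcrit : (derivative (toPoly d b')).roots.map (ζ * ·) = (derivative (toPoly d b)).roots := by
    have hder : derivative (toPoly d b') = (derivative (toPoly d b)).comp (C ζ * X + C 0) := by
      rw [hb', derivative_C_mul, derivative_comp, derivative_C_mul, derivative_X, mul_one,
        ← mul_assoc, ← C_mul, inv_mul_cancel₀ hζ0, C_1, one_mul, C_0, add_zero]
    simpa [hder] using map_roots_comp_C_mul_X_add_C (derivative (toPoly d b)) ζ 0 hζ0.isUnit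
  have hrates : escapeRate (toPoly d b) ∘ (ζ * ·) = escapeRate (toPoly d b') := funext fun z ↦
    (escapeRate_eq_of_semiconj hsemi (by simp [hζ1]) (by simp [natDegree_toPoly]) z).symm
  unfold heights
  rw [← hcrit, Multiset.map_map, hrates]

theorem Gq_eq_quot_lift {d : ℕ} (hd : 2 ≤ d) :
    Gq d = Quot.lift (heights d) fun _ _ h ↦ heights_eq_of_polyRel hd h := by
  funext q
  conv_rhs => rw [← Quot.out_eq q]
  rfl

theorem continuous_Gq {d : ℕ} (hd : 2 ≤ d) : Continuous (Gq d) := by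
  rw [Gq_eq_quot_lift hd]
  exact continuous_quot_lift _ (continuous_heights hd)

/-- The critical heights map `𝒢 : 𝕄P_d → ℋ_d` descends to a continuous
map `𝒢̄ : 𝒯_d^* → ℋ_d` on the quotient `𝒯_d^*`, and every fiber of `𝒢̄` is totally
disconnected. -/
theorem heights_descend_to_Tstar_with_totally_disconnected_fibers (d : ℕ) (hd : 2 ≤ d) :
    ∃ Gbar : Tstar d → (Fin (d - 1) → ℝ),
      Continuous Gbar ∧
      (∀ q : Moduli d, Gbar (Quot.mk (tRel d) q) = Gq d q) ∧
      ∀ h : Fin (d - 1) → ℝ, IsTotallyDisconnected (Gbar ⁻¹' {h}) :=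
  -- `tRel d` is `fiberComponentRel (Gq d)` by definition.
  ⟨Quot.lift (Gq d) fun _ _ ↦ fiberComponentRel.apply_eq,
    continuous_quot_lift _ (continuous_Gq hd), fun _ ↦ rfl,
    isTotallyDisconnected_preimage_quot_lift (continuous_Gq hd)⟩
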